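/- Let z = ρe^{iθ} with 0 ≤ ρ ≤ 1/10 and |θ| ≤ π/3, let m ∈ ℂ with 0.98 < |m| < 1, and let α ∈ ℂ with 3/5 < |α| < 1 and |arg α| < π/20. Then |z - α(1-|m|)| < |m|/10. -/

import Mathlib

/-!
Write `z = ρ e^{iθ}` and `α(1 - |m|) = r t e^{iψ}` with `r = |α|`, `ψ = arg α`, `t = 1 - |m|`.
By the law of cosines `|z - α(1 - |m|)|² = ρ² + (rt)² - 2ρ rt cos(θ - ψ)`, and
`|θ - ψ| ≤ π/3 + π/20 = 23π/60` gives `cos(θ - ψ) > 1/3`. The right-hand side is convex in `ρ`,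
so it suffices to compare it with `((1 - t)/10)²` at `ρ = 0`, where `rt < t < 1/50`, and at
`ρ = 1/10`, where the cross term `2ρ rt cos(θ - ψ) > t/25` beats `(rt)² + t/50`.
-/

open Complex Real

lemma norm_ofReal_mul_exp_sub_sq (ρ s θ ψ : ℝ) :
    ‖(ρ : ℂ) * exp (θ * I) - s * exp (ψ * I)‖ ^ 2 =
      ρ ^ 2 + s ^ 2 - 2 * ρ * s * Real.cos (θ - ψ) := by
  rw [Complex.sq_norm, normSq_apply]
  simp only [sub_re, sub_im, mul_re, mul_im, exp_ofReal_mul_I_re, exp_ofReal_mul_I_im,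
    ofReal_re, ofReal_im, zero_mul, sub_zero, add_zero]
  rw [Real.cos_sub]
  linear_combination ρ ^ 2 * Real.sin_sq_add_cos_sq θ + s ^ 2 * Real.sin_sq_add_cos_sq ψ

lemma one_third_lt_cos_of_abs_le {x : ℝ} (hx : |x| ≤ 23 * π / 60) : 1 / 3 < Real.cos x := by
  have hπ := Real.pi_gt_three
  have hcos : Real.sin (7 * π / 60) ≤ Real.cos x := by
    rw [← Real.cos_abs, ← Real.cos_pi_div_two_sub]
    exact Real.cos_le_cos_of_nonneg_of_le_pi (abs_nonneg x) (by linarith) (by linarith)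
  have hsin := Real.sin_gt_sub_cube (x := 7 * π / 60) (by positivity)
  -- `y ↦ y - y³/6` is increasing on `[0, 1]` and `7π/60 ∈ [7/20, 1]`
  have hπ4 := Real.pi_lt_four
  nlinarith [mul_pos (by linarith : (0 : ℝ) < 7 * π / 60 - 7 / 20)
    (by nlinarith : (0 : ℝ) < 6 - (7 * π / 60) ^ 2 - 7 * π / 60 * (7 / 20) - (7 / 20) ^ 2)]

lemma sq_add_sq_sub_two_mul_cos_lt {ρ t r C : ℝ} (hρ0 : 0 ≤ ρ) (hρ1 : ρ ≤ 1 / 10) (ht0 : 0 < t)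
    (ht1 : t < 1 / 50) (hr0 : 3 / 5 < r) (hr1 : r < 1) (hC : 1 / 3 < C) :
    ρ ^ 2 + (r * t) ^ 2 - 2 * ρ * (r * t) * C < ((1 - t) / 10) ^ 2 := by
  nlinarith [mul_nonneg hρ0 (by linarith : (0 : ℝ) ≤ 1 / 10 - ρ),
    mul_nonneg (mul_nonneg hρ0 ht0.le) (by linarith : (0 : ℝ) ≤ r - 3 / 5),
    mul_nonneg (mul_nonneg hρ0 ht0.le) (by linarith : (0 : ℝ) ≤ C - 1 / 3),
    mul_pos ht0 (mul_pos (by linarith : (0 : ℝ) < 1 - r) (by linarith : (0 : ℝ) < 1 + r))]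

/-- Core estimate for the inverse branch `ℓ₀⁻¹`: if `z = ρ e^{iθ}` lies in the
sector `{|z| ≤ 1/10, |arg z| ≤ π/3}`, `0.98 < |m| < 1`, and `α` satisfies
`3/5 < |α| < 1` and `|arg α| < π/20`, then `|z - α(1-|m|)| < |m|/10`. -/
theorem stmt2 (ρ θ : ℝ) (hρ0 : 0 ≤ ρ) (hρ1 : ρ ≤ 1 / 10) (hθ : |θ| ≤ π / 3)
    (m : ℂ) (hm1 : 0.98 < ‖m‖) (hm2 : ‖m‖ < 1)
    (α : ℂ) (hα1 : 3 / 5 < ‖α‖) (hα2 : ‖α‖ < 1)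
    (hα3 : |Complex.arg α| < π / 20) :
    ‖(ρ : ℂ) * Complex.exp (θ * Complex.I) -
        α * (1 - (‖m‖ : ℂ))‖ < ‖m‖ / 10 := by
  have hcos : 1 / 3 < Real.cos (θ - arg α) :=
    one_third_lt_cos_of_abs_le <| by linarith [abs_sub θ (arg α)]
  have hpolar : α * (1 - (‖m‖ : ℂ)) = ((‖α‖ * (1 - ‖m‖) : ℝ) : ℂ) * exp (arg α * I) := by
    conv_lhs => rw [← norm_mul_exp_arg_mul_I α]
    push_cast
    ring
  have hsq := sq_add_sq_sub_two_mul_cos_lt hρ0 hρ1 (t := 1 - ‖m‖) (by linarith)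
    (by norm_num at hm1 ⊢; linarith) hα1 hα2 hcos
  rw [hpolar]
  refine lt_of_pow_lt_pow_left₀ 2 (by positivity) ?_
  rw [norm_ofReal_mul_exp_sub_sq]
  rwa [sub_sub_cancel] at hsq
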